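/- Weak maximum principle for the 1-dimensional elliptic operator with nonlocal term: Let D ⊂ ℝ be open and bounded, u : ℝ → ℝ continuous on ℝ and C² on D, bounded above. Suppose for all x ∈ D, u''(x) + ∫ [u(x+z) - u(x) - z u'(x) 𝟙_{|z|<1}] ν(dz) ≥ 0, where ν is a Lévy measure on ℝ \ {0} with ∫ (1 ∧ z²) ν(dz) < ∞, and assume all integrals are finite. Then sup_{ℝ} u = sup_{ℝ \ D} u. -/

import Mathlib

/-!
Perturb `u` by `ε w`, where `w x = exp (l (x - T))` for `x ≤ T`, with `T` to the right of `D`,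
and `w` is frozen at `1` beyond `T`. At a global maximum `x₀ ∈ D` of `u + ε w` the local part of
the operator is at most `-ε l² w x₀`. In the nonlocal part, jumps with `|z| < 1` contribute
nonpositively because `w` is convex there, while the large jumps contribute at most
`ε w x₀ ν {|z| ≥ 1}`, a finite amount by the Lévy condition. With `l² ≥ ν {|z| ≥ 1} + 1` this gives
`L u x₀ ≤ -ε w x₀ < 0`, so the supremum of `u + ε w` is attained off `D`. Hence
`u ≤ sup_{Dᶜ} u + ε` for every `ε > 0`.
-/

open MeasureTheory Set Filter Topology Real

theorem IsLocalMax.deriv_deriv_nonpos {f : ℝ → ℝ} {x₀ : ℝ} (h : IsLocalMax f x₀)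
    (hc : ContinuousAt f x₀) : deriv (deriv f) x₀ ≤ 0 := by
  by_contra! hpos
  have hmin : IsLocalMin f x₀ := isLocalMin_of_deriv_deriv_pos hpos h.deriv_eq_zero hc
  have hconst : f =ᶠ[𝓝 x₀] fun _ => f x₀ :=
    (hmin.and h).mono fun _ hx => le_antisymm hx.2 hx.1
  have hzero : deriv (deriv f) x₀ = 0 := by
    rw [hconst.deriv.deriv_eq]
    simp
  exact hpos.ne' hzero

theorem hasDerivAt_deriv_add {f g : ℝ → ℝ} {x f'' g'' : ℝ}
    (hf : ∀ᶠ y in 𝓝 x, DifferentiableAt ℝ f y) (hg : ∀ᶠ y in 𝓝 x, DifferentiableAt ℝ g y)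
    (hf2 : HasDerivAt (deriv f) f'' x) (hg2 : HasDerivAt (deriv g) g'' x) :
    HasDerivAt (deriv fun y => f y + g y) (f'' + g'') x :=
  (hf2.add hg2).congr_of_eventuallyEq <| by
    filter_upwards [hf, hg] with y hfy hgy using deriv_fun_add hfy hgy

theorem le_of_le_on_compl_of_not_isMaxOn {α : Type*} [PseudoMetricSpace α] [ProperSpace α]
    {D : Set α} (hD : Bornology.IsBounded D) {v : α → ℝ} (hv : Continuous v) {b : ℝ}
    (hb : ∀ y ∉ D, v y ≤ b) (hmax : ∀ x ∈ D, ¬ IsMaxOn v univ x) (x : α) : v x ≤ b := by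
  by_contra! hx
  have hxD : x ∈ D := by_contra fun h => hx.not_ge (hb x h)
  obtain ⟨x₀, hx₀, hx₀max⟩ :=
    hD.isCompact_closure.exists_isMaxOn ⟨x, subset_closure hxD⟩ hv.continuousOn
  have hbx₀ : b < v x₀ := hx.trans_le (hx₀max (subset_closure hxD))
  have hx₀D : x₀ ∈ D := by_contra fun h => hbx₀.not_ge (hb x₀ h)
  refine hmax x₀ hx₀D fun y _ => ?_
  by_cases hy : y ∈ D
  · exact hx₀max (subset_closure hy)
  · exact (hb y hy).trans hbx₀.le

theorem integral_le_measureReal_mul_of_le_indicator {α : Type*} [MeasurableSpace α]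
    {μ : Measure α} {s : Set α} (hs : MeasurableSet s) (hμs : μ s ≠ ⊤) {c : ℝ} (hc : 0 ≤ c)
    {f : α → ℝ} (hf : ∀ x, f x ≤ s.indicator (fun _ => c) x) : ∫ x, f x ∂μ ≤ μ.real s * c := by
  by_cases hfi : Integrable f μ
  · calc ∫ x, f x ∂μ ≤ ∫ x, s.indicator (fun _ => c) x ∂μ :=
          integral_mono hfi ((integrable_indicator_iff hs).2 (integrableOn_const hμs)) hf
      _ = μ.real s * c := by rw [integral_indicator_const _ hs, smul_eq_mul]
  · rw [integral_undef hfi]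
    positivity

theorem measure_compl_abs_lt_one_lt_top {ν : Measure ℝ}
    (hLevy : ∫⁻ z, ENNReal.ofReal (min 1 (z ^ 2)) ∂ν < ⊤) : ν {z : ℝ | |z| < 1}ᶜ < ⊤ := by
  have hS : MeasurableSet {z : ℝ | |z| < 1}ᶜ :=
    (measurableSet_lt continuous_abs.measurable measurable_const).compl
  refine lt_of_le_of_lt ?_ hLevy
  rw [← lintegral_indicator_one hS]
  refine lintegral_mono fun z => ?_
  by_cases hz : z ∈ {z : ℝ | |z| < 1}ᶜ
  · have hz2 : 1 ≤ z ^ 2 := by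
      have : 1 ≤ |z| := not_lt.1 hz
      nlinarith [sq_abs z]
    simp [indicator_of_mem hz, min_eq_left hz2]
  · simp [indicator_of_notMem hz]

noncomputable def levyIntegrand (f : ℝ → ℝ) (x z : ℝ) : ℝ :=
  f (x + z) - f x - {w : ℝ | |w| < 1}.indicator (fun w => w * deriv f x) z

section levyIntegrand

variable {f g : ℝ → ℝ} {x : ℝ}

theorem levyIntegrand_add (hf : DifferentiableAt ℝ f x) (hg : DifferentiableAt ℝ g x) (z : ℝ) :
    levyIntegrand (fun y => f y + g y) x z = levyIntegrand f x z + levyIntegrand g x z := by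
  by_cases hz : |z| < 1 <;>
  · simp only [levyIntegrand, deriv_fun_add hf hg, indicator, mem_ofPred_eq, hz, if_true, if_false]
    ring

theorem levyIntegrand_const_mul (c z : ℝ) :
    levyIntegrand (fun y => c * f y) x z = c * levyIntegrand f x z := by
  by_cases hz : |z| < 1 <;>
  · simp only [levyIntegrand, deriv_const_mul_field', indicator, mem_ofPred_eq, hz, if_true,
      if_false]
    ring

theorem IsMaxOn.levyIntegrand_nonpos (h : IsMaxOn f univ x) (z : ℝ) : levyIntegrand f x z ≤ 0 := by
  have hderiv : deriv f x = 0 := (h.isLocalMax univ_mem).deriv_eq_zero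
  have hle : f (x + z) ≤ f x := h (mem_univ _)
  simp only [levyIntegrand, hderiv, mul_zero, indicator_zero, sub_zero]
  linarith

end levyIntegrand

/-- Frozen for `x ≥ T` so that it is bounded, which keeps `u + ε • expBarrier` bounded above. -/
noncomputable def expBarrier (l T x : ℝ) : ℝ := exp (l * (min x T - T))

section expBarrier

variable {l T x : ℝ}

theorem expBarrier_pos : 0 < expBarrier l T x := exp_pos _

theorem expBarrier_le_one (hl : 0 ≤ l) : expBarrier l T x ≤ 1 :=
  exp_le_one_iff.2 (mul_nonpos_of_nonneg_of_nonpos hl (by linarith [min_le_right x T]))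

theorem continuous_expBarrier : Continuous (expBarrier l T) := by
  unfold expBarrier
  fun_prop

theorem expBarrier_of_le (hx : x ≤ T) : expBarrier l T x = exp (l * (x - T)) := by
  rw [expBarrier, min_eq_left hx]

theorem hasDerivAt_expBarrier (hx : x < T) :
    HasDerivAt (expBarrier l T) (l * expBarrier l T x) x := by
  have hexp : HasDerivAt (fun y => exp (l * (y - T))) (exp (l * (x - T)) * (l * 1)) x :=
    (((hasDerivAt_id x).sub_const T).const_mul l).exp
  refine (hexp.congr_of_eventuallyEq ?_).congr_deriv ?_
  · filter_upwards [Iio_mem_nhds hx] with y hy using expBarrier_of_le hy.le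
  · rw [expBarrier_of_le hx.le]
    ring

theorem hasDerivAt_deriv_expBarrier (hx : x < T) :
    HasDerivAt (deriv (expBarrier l T)) (l ^ 2 * expBarrier l T x) x := by
  have hderiv : deriv (expBarrier l T) =ᶠ[𝓝 x] fun y => l * expBarrier l T y := by
    filter_upwards [Iio_mem_nhds hx] with y hy using (hasDerivAt_expBarrier hy).deriv
  refine (((hasDerivAt_expBarrier hx).const_mul l).congr_of_eventuallyEq hderiv).congr_deriv ?_
  ring

/-- Small jumps contribute nonnegatively since `exp t ≥ 1 + t`; large ones are `≥ -expBarrier x`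
by positivity. -/
theorem neg_indicator_le_levyIntegrand_expBarrier (hx : x ≤ T - 1) (z : ℝ) :
    -{w : ℝ | |w| < 1}ᶜ.indicator (fun _ => expBarrier l T x) z ≤
      levyIntegrand (expBarrier l T) x z := by
  have hderiv : deriv (expBarrier l T) x = l * expBarrier l T x :=
    (hasDerivAt_expBarrier (by linarith)).deriv
  have hxT : x ≤ T := by linarith
  by_cases hz : |z| < 1
  · have hxz : x + z ≤ T := by linarith [(abs_lt.1 hz).2]
    have hconvex : 0 ≤ exp (l * (x - T)) * (exp (l * z) - (l * z + 1)) :=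
      mul_nonneg (exp_pos _).le (sub_nonneg.2 (add_one_le_exp _))
    have hsplit : exp (l * (x + z - T)) = exp (l * (x - T)) * exp (l * z) := by
      rw [← exp_add]
      ring_nf
    simp only [levyIntegrand, hderiv, indicator, mem_compl_iff, mem_ofPred_eq, hz, if_true,
      not_true, if_false, neg_zero, expBarrier_of_le hxz, expBarrier_of_le hxT]
    rw [hsplit]
    linarith
  · simp only [levyIntegrand, indicator, mem_compl_iff, mem_ofPred_eq, hz, if_true, not_false_iff,
      if_false, sub_zero]
    linarith [expBarrier_pos (l := l) (T := T) (x := x + z)]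

end expBarrier

theorem not_isMaxOn_add_expBarrier {D : Set ℝ} (hD : IsOpen D) {u : ℝ → ℝ}
    (hC2 : ContDiffOn ℝ 2 u D) {ν : Measure ℝ} (hν : ν {z : ℝ | |z| < 1}ᶜ ≠ ⊤) {l T ε x₀ : ℝ}
    (hl : ν.real {z : ℝ | |z| < 1}ᶜ + 1 ≤ l ^ 2) (hε : 0 < ε) (hx₀ : x₀ ∈ D) (hxT : x₀ ≤ T - 1)
    (hL : 0 ≤ deriv (deriv u) x₀ + ∫ z, levyIntegrand u x₀ z ∂ν) :
    ¬ IsMaxOn (fun y => u y + ε * expBarrier l T y) univ x₀ := by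
  intro hmax
  set g : ℝ → ℝ := fun y => ε * expBarrier l T y
  set b := expBarrier l T x₀
  have hu : ∀ᶠ y in 𝓝 x₀, DifferentiableAt ℝ u y := by
    filter_upwards [hD.mem_nhds hx₀] with y hy
    exact (hC2.differentiableOn (by norm_num)).differentiableAt (hD.mem_nhds hy)
  have hg : ∀ᶠ y in 𝓝 x₀, DifferentiableAt ℝ g y := by
    filter_upwards [Iio_mem_nhds (show x₀ < T by linarith)] with y hy
    exact ((hasDerivAt_expBarrier hy).differentiableAt).const_mul ε
  have hu2 : HasDerivAt (deriv u) (deriv (deriv u) x₀) x₀ :=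
    (((hC2.deriv_of_isOpen hD (by norm_num : (1 : WithTop ℕ∞) + 1 ≤ 2)).differentiableOn
      one_ne_zero).differentiableAt (hD.mem_nhds hx₀)).hasDerivAt
  have hg2 : HasDerivAt (deriv g) (ε * (l ^ 2 * b)) x₀ := by
    rw [show deriv g = _ from deriv_const_mul_field' ε]
    exact (hasDerivAt_deriv_expBarrier (by linarith)).const_mul ε
  have hlocal : deriv (deriv u) x₀ + ε * (l ^ 2 * b) ≤ 0 := by
    rw [← (hasDerivAt_deriv_add hu hg hu2 hg2).deriv]
    exact (hmax.isLocalMax univ_mem).deriv_deriv_nonpos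
      (hu.self_of_nhds.add hg.self_of_nhds).continuousAt
  have hjump : ∀ z, levyIntegrand u x₀ z ≤ {w : ℝ | |w| < 1}ᶜ.indicator (fun _ => ε * b) z := by
    intro z
    have hsum := levyIntegrand_add hu.self_of_nhds hg.self_of_nhds z
    have hbarrier := mul_le_mul_of_nonneg_left
      (neg_indicator_le_levyIntegrand_expBarrier (l := l) hxT z) hε.le
    rw [← levyIntegrand_const_mul] at hbarrier
    rw [show _ = ε * _ from indicator_mul_right _ (fun _ => ε) fun _ => b]
    linarith [hmax.levyIntegrand_nonpos z]
  have hnonlocal : ∫ z, levyIntegrand u x₀ z ∂ν ≤ ν.real {z : ℝ | |z| < 1}ᶜ * (ε * b) :=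
    integral_le_measureReal_mul_of_le_indicator
      (measurableSet_lt continuous_abs.measurable measurable_const).compl hν
      (mul_pos hε expBarrier_pos).le hjump
  nlinarith [mul_pos hε (expBarrier_pos (l := l) (T := T) (x := x₀))]

theorem stmt_6_general (D : Set ℝ) (hD : IsOpen D) (hDb : Bornology.IsBounded D)
    (u : ℝ → ℝ) (hu : Continuous u) (hub : BddAbove (Set.range u))
    (hC2 : ContDiffOn ℝ 2 u D)
    (ν : Measure ℝ)
    (hLevy : ∫⁻ z, ENNReal.ofReal (min 1 (z ^ 2)) ∂ν < ⊤)
    (hL : ∀ x ∈ D, 0 ≤ deriv (deriv u) x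
      + ∫ z, (u (x + z) - u x
          - indicator {w : ℝ | |w| < 1} (fun w => w * deriv u x) z) ∂ν) :
    sSup (Set.range u) = sSup (u '' Dᶜ) := by
  obtain ⟨M, hM⟩ := hDb.bddAbove
  have hMD : M + 1 ∉ D := fun h => by linarith [hM h]
  set l := ν.real {z : ℝ | |z| < 1}ᶜ + 1
  have hl : l ≤ l ^ 2 := by nlinarith [measureReal_nonneg (μ := ν) (s := {z : ℝ | |z| < 1}ᶜ)]
  have hA : BddAbove (u '' Dᶜ) := hub.mono (image_subset_range u Dᶜ)
  have hbound : ∀ x, u x ≤ sSup (u '' Dᶜ) := by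
    intro x
    refine le_of_forall_pos_le_add fun ε hε => ?_
    have hoff : ∀ y ∉ D, u y + ε * expBarrier l (M + 1) y ≤ sSup (u '' Dᶜ) + ε := fun y hy =>
      add_le_add (le_csSup hA ⟨y, hy, rfl⟩)
        (mul_le_of_le_one_right hε.le (expBarrier_le_one (by positivity)))
    have hv := le_of_le_on_compl_of_not_isMaxOn (v := fun y => u y + ε * expBarrier l (M + 1) y) hDb
      (hu.add (continuous_const.mul continuous_expBarrier)) hoff
      (fun x₀ hx₀ => not_isMaxOn_add_expBarrier hD hC2 (measure_compl_abs_lt_one_lt_top hLevy).ne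
        hl hε hx₀ (by linarith [hM hx₀]) (hL x₀ hx₀)) x
    linarith [mul_pos hε (expBarrier_pos (l := l) (T := M + 1) (x := x))]
  exact le_antisymm (csSup_le (range_nonempty u) (forall_mem_range.2 hbound))
    (csSup_le_csSup hub ⟨u (M + 1), M + 1, hMD, rfl⟩ (image_subset_range u Dᶜ))

/-- Weak maximum principle for the 1-dimensional elliptic operator with a
nonlocal Lévy-type term: if `u'' + ∫ [u(x+z) - u(x) - z u'(x) 1_{|z|<1}] ν(dz) ≥ 0`
on an open bounded set `D`, then `sup_ℝ u = sup_{ℝ \ D} u`. -/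
theorem stmt_6 (D : Set ℝ) (hD : IsOpen D) (hDb : Bornology.IsBounded D)
    (u : ℝ → ℝ) (hu : Continuous u) (hub : BddAbove (Set.range u))
    (hC2 : ContDiffOn ℝ 2 u D)
    (ν : Measure ℝ) (hν0 : ν {0} = 0)
    (hLevy : ∫⁻ z, ENNReal.ofReal (min 1 (z ^ 2)) ∂ν < ⊤)
    (hint : ∀ x ∈ D, Integrable (fun z =>
      u (x + z) - u x - indicator {w : ℝ | |w| < 1} (fun w => w * deriv u x) z) ν)
    (hL : ∀ x ∈ D, 0 ≤ deriv (deriv u) x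
      + ∫ z, (u (x + z) - u x
          - indicator {w : ℝ | |w| < 1} (fun w => w * deriv u x) z) ∂ν) :
    sSup (Set.range u) = sSup (u '' Dᶜ) :=
  stmt_6_general D hD hDb u hu hub hC2 ν hLevy hL
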